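/- Fix ρ_p > 0, h > 0, and a point X_T ∈ ℝ² with r_T = |X_T|. For each integer n ≥ 2 let R_n = √(n/(π ρ_p)), let X_1, …, X_n be i.i.d. random points uniformly distributed on the closed disk of radius R_n centered at the origin in ℝ², and let M_1, …, M_n be i.i.d. random variables uniformly distributed on [0,1], independent of the positions. Define P_i = 1 if and only if |X_i − X_T| ≥ h and M_i < M_j for every j ≠ i with |X_i − X_j| < h, and let 𝒜_n be the event that X_1 and X_2 both lie in the annulus {x ∈ ℝ² : r_T + 2h ≤ |x| ≤ R_n − h} and |X_1 − X_2| > 2h. Then lim_{n→∞} Pr(P_1 = 1 and P_2 = 1 | 𝒜_n) = ( (1 − exp(−π ρ_p h²)) / (π ρ_p h²) )². -/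

import Mathlib

open MeasureTheory ProbabilityTheory Set Real Filter

/-- The uniform probability measure on the closed disk of radius `R` centered at the
origin of the plane. -/
noncomputable def unifDisk (R : ℝ) : Measure (EuclideanSpace ℝ (Fin 2)) :=
  (volume (Metric.closedBall (0 : EuclideanSpace ℝ (Fin 2)) R))⁻¹ •
    volume.restrict (Metric.closedBall (0 : EuclideanSpace ℝ (Fin 2)) R)

/-- The uniform probability measure on `[0,1]`. -/
noncomputable def unifUnit : Measure ℝ := volume.restrict (Set.Icc (0:ℝ) 1)

/-!
Split a configuration of `n + 2` marked points into the two tagged points and the `n` others.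
On `𝒜_n` the tagged points are automatically at distance `≥ h` from `X_T`, their `h`-balls are
disjoint and lie in the disk, and they cannot suppress each other. So both are active iff every
other point `(x, m)` avoids the two disjoint regions `B(X_i, h) × [0, M_i]`; given the marks this
has probability `(1 - (h / R)² (M_1 + M_2))ⁿ`, independently of the positions. Conditioning on
`𝒜_n` (of positive probability once `R ≥ r_T + 5h`) therefore only averages this over the two
marks, and since `(h / R_{n+2})² = c / (n + 2)` with `c = π ρ_p h²`, dominated convergence gives
`∫∫ exp (-c (m₁ + m₂)) dm₁ dm₂ = ((1 - e^{-c}) / c)²`.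
-/

open scoped ENNReal Topology

namespace MeasureTheory

variable {α β γ δ : Type*} [MeasurableSpace α] [MeasurableSpace β] [MeasurableSpace γ]
  [MeasurableSpace δ]

theorem measurePreserving_prodProdProdComm (μ : Measure α) (ν : Measure β) (ρ : Measure γ)
    (τ : Measure δ) [SFinite μ] [SFinite ν] [SFinite ρ] [SFinite τ] :
    MeasurePreserving (fun w : (α × β) × (γ × δ) => ((w.1.1, w.2.1), (w.1.2, w.2.2)))
      ((μ.prod ν).prod (ρ.prod τ)) ((μ.prod ρ).prod (ν.prod τ)) := by
  have hmid : MeasurePreserving (fun w : β × (γ × δ) => (w.2.1, (w.1, w.2.2)))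
      (ν.prod (ρ.prod τ)) (ρ.prod (ν.prod τ)) :=
    ((measurePreserving_prodAssoc ρ ν τ).comp
      ((Measure.measurePreserving_swap (μ := ν) (ν := ρ)).prod (MeasurePreserving.id τ))).comp
      ((measurePreserving_prodAssoc ν ρ τ).symm MeasurableEquiv.prodAssoc)
  exact (((measurePreserving_prodAssoc μ ρ (ν.prod τ)).symm MeasurableEquiv.prodAssoc).comp
    ((MeasurePreserving.id μ).prod hmid)).comp (measurePreserving_prodAssoc μ ν (ρ.prod τ))

theorem setLIntegral_prod_prod_eq_mul (μ : Measure α) (ν : Measure β) (ρ : Measure γ)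
    (τ : Measure δ) [SFinite μ] [SFinite ν] [SFinite ρ] [SFinite τ]
    {A : Set (α × γ)} (hA : MeasurableSet A) {g : β × δ → ℝ≥0∞} (hg : Measurable g) :
    ∫⁻ w in {w : (α × β) × (γ × δ) | (w.1.1, w.2.1) ∈ A}, g (w.1.2, w.2.2)
        ∂((μ.prod ν).prod (ρ.prod τ)) = (μ.prod ρ) A * ∫⁻ m, g m ∂(ν.prod τ) := by
  have hset : {w : (α × β) × (γ × δ) | (w.1.1, w.2.1) ∈ A} =
      (fun w => ((w.1.1, w.2.1), (w.1.2, w.2.2))) ⁻¹' (A ×ˢ univ) := by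
    ext; simp
  rw [hset]
  refine ((measurePreserving_prodProdProdComm μ ν ρ τ).setLIntegral_comp_preimage
    (hA.prod MeasurableSet.univ) (hg.comp measurable_snd)).trans ?_
  rw [← Measure.prod_restrict, Measure.restrict_univ]
  simpa using lintegral_prod_mul (μ := (μ.prod ρ).restrict A) (ν := ν.prod τ)
    (f := fun _ => 1) aemeasurable_const hg.aemeasurable

theorem measurePreserving_pi_fin_add_two (ν : Measure α) [SigmaFinite ν] (n : ℕ) :
    MeasurePreserving (fun f : Fin (n + 2) → α => ((f 0, f 1), fun k : Fin n => f k.succ.succ))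
      (Measure.pi fun _ => ν) ((ν.prod ν).prod (Measure.pi fun _ => ν)) := by
  have h := ((MeasurePreserving.id ν).prod
    (measurePreserving_piFinSuccAbove (fun _ : Fin (n + 1) => ν) 0)).comp
    (measurePreserving_piFinSuccAbove (fun _ : Fin (n + 2) => ν) 0)
  exact ((measurePreserving_prodAssoc ν ν _).symm MeasurableEquiv.prodAssoc).comp h

theorem measure_pi_fin_add_two_eq_setLIntegral (ν : Measure α) [SigmaFinite ν] (n : ℕ)
    {A : Set (α × α)} (hA : MeasurableSet A) {S : Set ((α × α) × α)} (hS : MeasurableSet S) :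
    Measure.pi (fun _ : Fin (n + 2) => ν)
        {f | (f 0, f 1) ∈ A ∧ ∀ k : Fin n, ((f 0, f 1), f k.succ.succ) ∈ S} =
      ∫⁻ q in A, ν (Prod.mk q ⁻¹' S) ^ n ∂(ν.prod ν) := by
  set T : Set ((α × α) × (Fin n → α)) := {p | p.1 ∈ A ∧ ∀ k, (p.1, p.2 k) ∈ S}
  have hT : MeasurableSet T := measurableSet_setOfPred.2 (by fun_prop)
  refine ((measurePreserving_pi_fin_add_two ν n).measure_preimage hT.nullMeasurableSet).trans ?_
  rw [Measure.prod_apply hT, ← lintegral_indicator hA]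
  refine lintegral_congr fun q => ?_
  by_cases hq : q ∈ A
  · have hsection : Prod.mk q ⁻¹' T = univ.pi fun _ => Prod.mk q ⁻¹' S := by
      ext f; simp [T, hq]
    rw [indicator_of_mem hq, hsection, Measure.pi_pi, Finset.prod_const, Finset.card_fin]
  · have hsection : Prod.mk q ⁻¹' T = ∅ := by
      ext f; simp [T, hq]
    rw [indicator_of_notMem hq, hsection, measure_empty]

end MeasureTheory

theorem ProbabilityTheory.cond_apply_preimage {Ω α : Type*} [MeasurableSpace Ω]
    [MeasurableSpace α] (μ : Measure Ω) {f : Ω → α} (hf : Measurable f) {s t : Set α}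
    (hs : MeasurableSet s) (ht : MeasurableSet t) :
    μ[|f ⁻¹' s] (f ⁻¹' t) = (μ.map f)[|s] t := by
  rw [cond_apply (hs.preimage hf), cond_apply hs,
    Measure.map_apply hf hs, Measure.map_apply hf (hs.inter ht), preimage_inter]

local notation "ℝ²" => EuclideanSpace ℝ (Fin 2)

instance : IsProbabilityMeasure unifUnit :=
  ⟨by simp [unifUnit]⟩

theorem isProbabilityMeasure_unifDisk {R : ℝ} (hR : 0 < R) : IsProbabilityMeasure (unifDisk R) :=
  ⟨by simp [unifDisk, ENNReal.inv_mul_cancel, hR, Real.pi_pos, ENNReal.mul_eq_top]⟩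

theorem unifDisk_ball {R r : ℝ} (hR : 0 < R) (hr : 0 ≤ r) {x : ℝ²} (hx : ‖x‖ + r ≤ R) :
    unifDisk R (Metric.ball x r) = ENNReal.ofReal (r ^ 2 / R ^ 2) := by
  have hsub : Metric.ball x r ⊆ Metric.closedBall 0 R := by
    refine (Metric.ball_subset_ball' ?_).trans Metric.ball_subset_closedBall
    rwa [dist_zero_right, add_comm]
  rw [unifDisk, Measure.smul_apply, Measure.restrict_apply measurableSet_ball,
    inter_eq_left.2 hsub, smul_eq_mul, EuclideanSpace.volume_closedBall_fin_two,
    EuclideanSpace.volume_ball_fin_two,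
    ← ENNReal.ofReal_pow hR.le, ← ENNReal.ofReal_pow hr, ← ENNReal.ofReal_mul (by positivity),
    ← ENNReal.ofReal_mul (by positivity), ← ENNReal.ofReal_inv_of_pos (by positivity),
    ← ENNReal.ofReal_mul (by positivity)]
  congr 1
  field_simp

theorem unifUnit_Iic {m : ℝ} (hm : m ∈ Icc (0 : ℝ) 1) : unifUnit (Iic m) = ENNReal.ofReal m := by
  have hinter : Iic m ∩ Icc 0 1 = Icc 0 m := by
    ext
    grind
  rw [unifUnit, Measure.restrict_apply measurableSet_Iic, hinter, Real.volume_Icc, sub_zero]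

theorem unifUnit_prod_unifUnit :
    unifUnit.prod unifUnit = volume.restrict (Icc (0 : ℝ) 1 ×ˢ Icc (0 : ℝ) 1) := by
  rw [unifUnit, Measure.prod_restrict, Measure.volume_eq_prod]

theorem integral_exp_neg_mul_unifUnit {c : ℝ} (hc : 0 < c) :
    ∫ m, Real.exp (-(c * m)) ∂unifUnit = (1 - Real.exp (-c)) / c := by
  rw [unifUnit, integral_Icc_eq_integral_Ioc, ← intervalIntegral.integral_of_le zero_le_one]
  simp_rw [← neg_mul]
  rw [intervalIntegral.integral_comp_mul_left Real.exp (neg_ne_zero.2 hc.ne'), integral_exp,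
    mul_zero, mul_one, Real.exp_zero, smul_eq_mul]
  field_simp
  ring

section Model

variable {E : Type*} [SeminormedAddCommGroup E]

def annulusPairs (rT h R : ℝ) : Set (E × E) :=
  {v | (rT + 2 * h ≤ ‖v.1‖ ∧ ‖v.1‖ ≤ R - h) ∧ (rT + 2 * h ≤ ‖v.2‖ ∧ ‖v.2‖ ≤ R - h) ∧
    2 * h < dist v.1 v.2}

/-- A configuration lists the position–mark pairs `c i = (X_i, M_i)`; `IsActive h XT c i` is the
paper's `P_i = 1`. -/
def IsActive (h : ℝ) (XT : E) {N : ℕ} (c : Fin N → E × ℝ) (i : Fin N) : Prop :=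
  h ≤ dist (c i).1 XT ∧ ∀ j, j ≠ i → dist (c i).1 (c j).1 < h → (c i).2 < (c j).2

def noConflict (h : ℝ) (e₀ e₁ : E × ℝ) : Set (E × ℝ) :=
  {e | (dist e₀.1 e.1 < h → e₀.2 < e.2) ∧ (dist e₁.1 e.1 < h → e₁.2 < e.2)}

theorem le_dist_of_add_two_mul_le_norm {rT h : ℝ} {x XT : E} (hXT : ‖XT‖ ≤ rT) (hh : 0 ≤ h)
    (hx : rT + 2 * h ≤ ‖x‖) : h ≤ dist x XT := by
  linarith [norm_sub_norm_le x XT, dist_eq_norm x XT]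

theorem annulusPairs_inter_isActive_eq {rT h R : ℝ} {XT : E} (hXT : ‖XT‖ ≤ rT) (hh : 0 ≤ h)
    (n : ℕ) :
    {c : Fin (n + 2) → E × ℝ | ((c 0).1, (c 1).1) ∈ annulusPairs rT h R} ∩
        {c | IsActive h XT c 0 ∧ IsActive h XT c 1} =
      {c | ((c 0).1, (c 1).1) ∈ annulusPairs rT h R ∧
        ∀ k : Fin n, c k.succ.succ ∈ noConflict h (c 0) (c 1)} := by
  ext c
  simp only [mem_inter_iff, mem_ofPred_eq, IsActive, noConflict, Fin.forall_fin_succ, ne_eq,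
    Fin.succ_ne_zero, Fin.succ_zero_eq_one, Fin.succ_succ_ne_one, zero_ne_one, not_false_eq_true,
    not_true_eq_false, true_imp_iff, false_imp_iff, true_and]
  constructor
  · rintro ⟨hA, ⟨-, -, h₀⟩, -, -, h₁⟩
    exact ⟨hA, fun k => ⟨h₀ k, h₁ k⟩⟩
  · rintro ⟨hA, hk⟩
    obtain ⟨⟨hx₀, -⟩, ⟨hx₁, -⟩, hd⟩ := id hA
    refine ⟨hA, ⟨le_dist_of_add_two_mul_le_norm hXT hh hx₀, fun hlt => ?_, fun k => (hk k).1⟩,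
      le_dist_of_add_two_mul_le_norm hXT hh hx₁, fun hlt => ?_, fun k => (hk k).2⟩
    · linarith
    · linarith [dist_comm (c 0).1 (c 1).1]

theorem ball_prod_ball_neg_subset_annulusPairs [NormedSpace ℝ E] {rT h R : ℝ} (hrT : 0 ≤ rT)
    (hR : rT + 5 * h ≤ R) {a : E} (ha : ‖a‖ = rT + 3 * h) :
    Metric.ball a h ×ˢ Metric.ball (-a) h ⊆ annulusPairs rT h R := by
  rintro ⟨x, y⟩ ⟨hx : dist x a < h, hy : dist y (-a) < h⟩
  have hnx : |‖x‖ - ‖a‖| < h := (abs_norm_sub_norm_le x a).trans_lt (by rwa [← dist_eq_norm])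
  have hny : |‖y‖ - ‖a‖| < h := by
    simpa only [norm_neg] using
      (abs_norm_sub_norm_le y (-a)).trans_lt (by rwa [← dist_eq_norm])
  have hsep : 2 * ‖a‖ ≤ dist x a + dist x y + dist y (-a) :=
    calc 2 * ‖a‖ = dist a (-a) := by
          rw [dist_eq_norm, sub_neg_eq_add, ← two_smul ℝ, norm_smul, Real.norm_two]
      _ ≤ dist a x + dist x y + dist y (-a) := dist_triangle4 _ _ _ _
      _ = dist x a + dist x y + dist y (-a) := by rw [dist_comm a x]
  rw [abs_lt] at hnx hny
  exact ⟨⟨by linarith, by linarith⟩, ⟨by linarith, by linarith⟩,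
    show 2 * h < dist x y by linarith⟩

end Model

theorem measurableSet_annulusPairs (rT h R : ℝ) :
    MeasurableSet (annulusPairs rT h R : Set (ℝ² × ℝ²)) :=
  measurableSet_setOfPred.2 (by fun_prop)

theorem measurableSet_isActive (h : ℝ) (XT : ℝ²) {N : ℕ} (i : Fin N) :
    MeasurableSet {c : Fin N → ℝ² × ℝ | IsActive h XT c i} :=
  measurableSet_setOfPred.2 (by unfold IsActive; fun_prop)

theorem measurableSet_annulusPairs_zero_one (rT h R : ℝ) (n : ℕ) :
    MeasurableSet {c : Fin (n + 2) → ℝ² × ℝ | ((c 0).1, (c 1).1) ∈ annulusPairs rT h R} :=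
  (measurableSet_annulusPairs rT h R).preimage (by fun_prop)

theorem measurable_unifUnit_Iic : Measurable fun m : ℝ => unifUnit (Iic m) :=
  Monotone.measurable fun _ _ hab => measure_mono (Iic_subset_Iic.2 hab)

theorem measure_annulusPairs_ne_zero {rT h R : ℝ} (hrT : 0 ≤ rT) (hh : 0 < h)
    (hR : rT + 5 * h ≤ R) :
    ((unifDisk R).prod (unifDisk R)) (annulusPairs rT h R) ≠ 0 := by
  have hR₀ : 0 < R := by linarith
  have := isProbabilityMeasure_unifDisk hR₀
  set a : ℝ² := EuclideanSpace.single 0 (rT + 3 * h)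
  have ha : ‖a‖ = rT + 3 * h := by
    rw [PiLp.norm_single, Real.norm_of_nonneg (by linarith)]
  refine (measure_mono_null (ball_prod_ball_neg_subset_annulusPairs hrT hR ha)).mt ?_
  have hball : ENNReal.ofReal (h ^ 2 / R ^ 2) ≠ 0 := (ENNReal.ofReal_pos.2 (by positivity)).ne'
  rw [Measure.prod_prod, unifDisk_ball hR₀ hh.le (by linarith),
    unifDisk_ball hR₀ hh.le (by rw [norm_neg]; linarith)]
  exact mul_ne_zero hball hball

theorem measure_noConflict {R h : ℝ} (hR : 0 < R) (hh : 0 ≤ h) {e₀ e₁ : ℝ² × ℝ}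
    (h₀ : ‖e₀.1‖ ≤ R - h) (h₁ : ‖e₁.1‖ ≤ R - h) (hd : 2 * h ≤ dist e₀.1 e₁.1) :
    ((unifDisk R).prod unifUnit) (noConflict h e₀ e₁) =
      1 - ENNReal.ofReal (h ^ 2 / R ^ 2) * (unifUnit (Iic e₀.2) + unifUnit (Iic e₁.2)) := by
  have := isProbabilityMeasure_unifDisk hR
  have hcompl : noConflict h e₀ e₁ =
      (Metric.ball e₀.1 h ×ˢ Iic e₀.2 ∪ Metric.ball e₁.1 h ×ˢ Iic e₁.2)ᶜ := by
    ext e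
    simp only [noConflict, mem_ofPred_eq, mem_compl_iff, mem_union, mem_prod, Metric.mem_ball,
      mem_Iic, not_or, not_and, not_le, dist_comm e.1]
  have hdisj : Disjoint (Metric.ball e₀.1 h ×ˢ Iic e₀.2) (Metric.ball e₁.1 h ×ˢ Iic e₁.2) :=
    (Metric.ball_disjoint_ball (by linarith)).set_prod_left _ _
  have hmeas : ∀ (x : ℝ²) (m : ℝ), MeasurableSet (Metric.ball x h ×ˢ Iic m) :=
    fun _ _ => measurableSet_ball.prod measurableSet_Iic
  rw [hcompl, measure_compl ((hmeas _ _).union (hmeas _ _)) (measure_ne_top _ _), measure_univ,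
    measure_union hdisj (hmeas _ _), Measure.prod_prod, Measure.prod_prod,
    unifDisk_ball hR hh (by linarith), unifDisk_ball hR hh (by linarith), mul_add]

theorem toReal_lintegral_one_sub_mul_unifUnit_Iic_pow {a : ℝ} (ha : 0 ≤ a) (ha' : 2 * a ≤ 1)
    (n : ℕ) :
    (∫⁻ m, (1 - ENNReal.ofReal a * (unifUnit (Iic m.1) + unifUnit (Iic m.2))) ^ n
        ∂(unifUnit.prod unifUnit)).toReal =
      ∫ m, (1 - a * (m.1 + m.2)) ^ n ∂(unifUnit.prod unifUnit) := by
  have hnonneg : ∀ m ∈ Icc (0 : ℝ) 1 ×ˢ Icc (0 : ℝ) 1, 0 ≤ 1 - a * (m.1 + m.2) := by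
    rintro m ⟨⟨-, h₁⟩, ⟨-, h₂⟩⟩
    nlinarith
  have hK : MeasurableSet (Icc (0 : ℝ) 1 ×ˢ Icc (0 : ℝ) 1) :=
    measurableSet_Icc.prod measurableSet_Icc
  rw [unifUnit_prod_unifUnit, integral_eq_lintegral_of_nonneg_ae
    ((ae_restrict_iff' hK).2 (Eventually.of_forall fun m hm => pow_nonneg (hnonneg m hm) n))
    (by fun_prop : Continuous fun m : ℝ × ℝ => (1 - a * (m.1 + m.2)) ^ n).aestronglyMeasurable]
  congr 1
  refine setLIntegral_congr_fun hK fun m hm => ?_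
  have h₁ := hm.1.1
  have h₂ := hm.2.1
  rw [unifUnit_Iic hm.1, unifUnit_Iic hm.2, ENNReal.ofReal_pow (hnonneg m hm),
    ← ENNReal.ofReal_add h₁ h₂, ← ENNReal.ofReal_mul ha, ← ENNReal.ofReal_one,
    ← ENNReal.ofReal_sub _ (by positivity)]

theorem measure_pi_annulusPairs {rT h R : ℝ} (hR : 0 < R) (n : ℕ) :
    Measure.pi (fun _ : Fin (n + 2) => (unifDisk R).prod unifUnit)
        {c | ((c 0).1, (c 1).1) ∈ annulusPairs rT h R} =
      ((unifDisk R).prod (unifDisk R)) (annulusPairs rT h R) := by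
  have := isProbabilityMeasure_unifDisk hR
  have hfubini := measure_pi_fin_add_two_eq_setLIntegral ((unifDisk R).prod unifUnit) n
    ((measurableSet_annulusPairs rT h R).preimage
      (by fun_prop : Measurable fun q : (ℝ² × ℝ) × (ℝ² × ℝ) => (q.1.1, q.2.1)))
    MeasurableSet.univ
  have hsplit := setLIntegral_prod_prod_eq_mul (unifDisk R) unifUnit (unifDisk R) unifUnit
    (measurableSet_annulusPairs rT h R) (measurable_const (a := (1 : ℝ≥0∞)))
  simp only [mem_univ, implies_true, and_true, preimage_univ, measure_univ, one_pow,
    setLIntegral_one] at hfubini hsplit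
  rw [lintegral_one, measure_univ, mul_one] at hsplit
  exact hfubini.trans hsplit

theorem measure_pi_annulusPairs_forall_noConflict {rT h R : ℝ} (hR : 0 < R) (hh : 0 ≤ h)
    (n : ℕ) :
    Measure.pi (fun _ : Fin (n + 2) => (unifDisk R).prod unifUnit)
        {c | ((c 0).1, (c 1).1) ∈ annulusPairs rT h R ∧
          ∀ k : Fin n, c k.succ.succ ∈ noConflict h (c 0) (c 1)} =
      ((unifDisk R).prod (unifDisk R)) (annulusPairs rT h R) *
        ∫⁻ m, (1 - ENNReal.ofReal (h ^ 2 / R ^ 2) * (unifUnit (Iic m.1) + unifUnit (Iic m.2))) ^ n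
          ∂(unifUnit.prod unifUnit) := by
  have := isProbabilityMeasure_unifDisk hR
  have hA := (measurableSet_annulusPairs rT h R).preimage
    (by fun_prop : Measurable fun q : (ℝ² × ℝ) × (ℝ² × ℝ) => (q.1.1, q.2.1))
  have hS : MeasurableSet {p : ((ℝ² × ℝ) × (ℝ² × ℝ)) × (ℝ² × ℝ) | p.2 ∈ noConflict h p.1.1 p.1.2} :=
    measurableSet_setOfPred.2 (by simp only [noConflict, mem_ofPred_eq]; fun_prop)
  have hg : Measurable fun m : ℝ × ℝ =>
      (1 - ENNReal.ofReal (h ^ 2 / R ^ 2) * (unifUnit (Iic m.1) + unifUnit (Iic m.2))) ^ n :=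
    ((measurable_const.mul ((measurable_unifUnit_Iic.comp measurable_fst).add
      (measurable_unifUnit_Iic.comp measurable_snd))).const_sub 1).pow_const n
  refine (measure_pi_fin_add_two_eq_setLIntegral _ n hA hS).trans ?_
  rw [← setLIntegral_prod_prod_eq_mul _ _ _ _ (measurableSet_annulusPairs rT h R) hg]
  refine setLIntegral_congr_fun hA fun q ⟨⟨_, h₀⟩, ⟨_, h₁⟩, hd⟩ => ?_
  rw [← measure_noConflict hR hh h₀ h₁ hd.le]
  rfl

theorem toReal_pi_cond_isActive_zero_one {rT h R : ℝ} {XT : ℝ²} (hXT : ‖XT‖ ≤ rT) (hh : 0 < h)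
    (hR : rT + 5 * h ≤ R) (n : ℕ) :
    ((Measure.pi fun _ : Fin (n + 2) => (unifDisk R).prod unifUnit)[|{c | ((c 0).1, (c 1).1) ∈
        annulusPairs rT h R}] {c | IsActive h XT c 0 ∧ IsActive h XT c 1}).toReal =
      ∫ m, (1 - h ^ 2 / R ^ 2 * (m.1 + m.2)) ^ n ∂(unifUnit.prod unifUnit) := by
  have hrT : 0 ≤ rT := (norm_nonneg XT).trans hXT
  have hR₀ : 0 < R := by linarith
  have := isProbabilityMeasure_unifDisk hR₀
  have ha : 2 * (h ^ 2 / R ^ 2) ≤ 1 := by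
    rw [mul_div_assoc', div_le_one (by positivity)]
    nlinarith
  rw [cond_apply (measurableSet_annulusPairs_zero_one rT h R n),
    annulusPairs_inter_isActive_eq hXT hh.le, measure_pi_annulusPairs_forall_noConflict hR₀ hh.le,
    measure_pi_annulusPairs hR₀, ENNReal.inv_mul_cancel_left
      (measure_annulusPairs_ne_zero hrT hh hR) (measure_ne_top _ _),
    toReal_lintegral_one_sub_mul_unifUnit_Iic_pow (by positivity) ha]

theorem tendsto_one_sub_div_add_two_mul_pow (c s : ℝ) :
    Tendsto (fun n : ℕ => (1 - c / ((n : ℝ) + 2) * s) ^ n) atTop (𝓝 (Real.exp (-(c * s)))) := by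
  have hlin : Tendsto (fun n : ℕ => (n : ℝ) * -(c / ((n : ℝ) + 2) * s)) atTop (𝓝 (-(c * s))) := by
    have := (tendsto_natCast_div_add_atTop (2 : ℝ)).const_mul (-(c * s))
    rw [mul_one] at this
    refine this.congr fun n => ?_
    field_simp
  exact (Real.tendsto_one_add_pow_exp_of_tendsto hlin).congr fun n => by rw [← sub_eq_add_neg]

theorem tendsto_integral_one_sub_div_add_two_mul_pow {c : ℝ} (hc : 0 < c) :
    Tendsto (fun n : ℕ =>
        ∫ m, (1 - c / ((n : ℝ) + 2) * (m.1 + m.2)) ^ n ∂(unifUnit.prod unifUnit))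
      atTop (𝓝 (((1 - Real.exp (-c)) / c) ^ 2)) := by
  have hlim : ∫ m, Real.exp (-(c * (m.1 + m.2))) ∂(unifUnit.prod unifUnit) =
      ((1 - Real.exp (-c)) / c) ^ 2 := by
    simp_rw [mul_add, neg_add, Real.exp_add]
    rw [integral_prod_mul (fun m => Real.exp (-(c * m))) (fun m => Real.exp (-(c * m))),
      integral_exp_neg_mul_unifUnit hc, sq]
  rw [← hlim]
  refine tendsto_integral_filter_of_dominated_convergence (fun _ => 1)
    (Eventually.of_forall fun n => (by fun_prop : Continuous fun m : ℝ × ℝ =>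
      (1 - c / ((n : ℝ) + 2) * (m.1 + m.2)) ^ n).aestronglyMeasurable) ?_ (integrable_const 1)
    (Eventually.of_forall fun m => tendsto_one_sub_div_add_two_mul_pow c (m.1 + m.2))
  filter_upwards [(tendsto_natCast_atTop_atTop (R := ℝ)).eventually_ge_atTop c] with n hn
  have ha : c / ((n : ℝ) + 2) ≤ 1 := (div_le_one (by positivity)).2 (by linarith)
  rw [unifUnit_prod_unifUnit, ae_restrict_iff' (measurableSet_Icc.prod measurableSet_Icc)]
  refine Eventually.of_forall fun m ⟨⟨h₁, h₁'⟩, ⟨h₂, h₂'⟩⟩ => ?_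
  have hs₀ : 0 ≤ c / ((n : ℝ) + 2) * (m.1 + m.2) := mul_nonneg (by positivity) (by linarith)
  have hs₂ : c / ((n : ℝ) + 2) * (m.1 + m.2) ≤ 2 := by nlinarith
  rw [norm_pow, Real.norm_eq_abs]
  exact pow_le_one₀ (abs_nonneg _) (abs_le.2 ⟨by linarith, by linarith⟩)

theorem toReal_cond_isActive_zero_one_of_iIndepFun {Ω : Type*} [MeasurableSpace Ω]
    {P : Measure Ω} {n : ℕ} {V : Fin (n + 2) → Ω → ℝ² × ℝ} (hV : ∀ i, Measurable (V i))
    (hind : iIndepFun V P) {rT h R : ℝ} (hlaw : ∀ i, P.map (V i) = (unifDisk R).prod unifUnit)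
    {XT : ℝ²} (hXT : ‖XT‖ ≤ rT) (hh : 0 < h) (hR : rT + 5 * h ≤ R) :
    (P[|{ω | ((V 0 ω).1, (V 1 ω).1) ∈ annulusPairs rT h R}]
        {ω | IsActive h XT (fun i => V i ω) 0 ∧ IsActive h XT (fun i => V i ω) 1}).toReal =
      ∫ m, (1 - h ^ 2 / R ^ 2 * (m.1 + m.2)) ^ n ∂(unifUnit.prod unifUnit) := by
  have hlaw_pi : P.map (fun ω i => V i ω) = Measure.pi fun _ => (unifDisk R).prod unifUnit := by
    rw [hind.map_fun_eq_pi_map fun i => (hV i).aemeasurable, funext hlaw]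
  have hB : MeasurableSet {c : Fin (n + 2) → ℝ² × ℝ | IsActive h XT c 0 ∧ IsActive h XT c 1} :=
    (measurableSet_isActive h XT 0).inter (measurableSet_isActive h XT 1)
  rw [← toReal_pi_cond_isActive_zero_one hXT hh hR n, ← hlaw_pi, ← cond_apply_preimage P
    (measurable_pi_lambda _ hV) (measurableSet_annulusPairs_zero_one rT h R n) hB]
  rfl

theorem stmt11_general (ρp h : ℝ) (hρp : 0 < ρp) (hh : 0 < h)
    (XT : EuclideanSpace ℝ (Fin 2)) (rT : ℝ) (hrT : rT = ‖XT‖)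
    (R : ℕ → ℝ) (hR : ∀ n : ℕ, R n = Real.sqrt (n / (π * ρp)))
    (Ω : ℕ → Type) [∀ n, MeasurableSpace (Ω n)]
    (P : (n : ℕ) → Measure (Ω n))
    (X : (n : ℕ) → Fin n → Ω n → EuclideanSpace ℝ (Fin 2))
    (M : (n : ℕ) → Fin n → Ω n → ℝ)
    (hmeasX : ∀ n i, Measurable (X n i)) (hmeasM : ∀ n i, Measurable (M n i))
    (hindep : ∀ n, iIndepFun
      (fun i : Fin n => fun ω => (X n i ω, M n i ω)) (P n))
    (hlaw : ∀ n (i : Fin n), (P n).map (fun ω => (X n i ω, M n i ω)) =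
      (unifDisk (R n)).prod unifUnit) :
    Tendsto
      (fun n : ℕ =>
        (((P (n + 2))[|{ω | (rT + 2 * h ≤ ‖X (n + 2) 0 ω‖ ∧ ‖X (n + 2) 0 ω‖ ≤ R (n + 2) - h) ∧
            (rT + 2 * h ≤ ‖X (n + 2) 1 ω‖ ∧ ‖X (n + 2) 1 ω‖ ≤ R (n + 2) - h) ∧
            2 * h < dist (X (n + 2) 0 ω) (X (n + 2) 1 ω)}])
          {ω | (h ≤ dist (X (n + 2) 0 ω) XT ∧
              ∀ j : Fin (n + 2), j ≠ 0 →
                dist (X (n + 2) 0 ω) (X (n + 2) j ω) < h →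
                  M (n + 2) 0 ω < M (n + 2) j ω) ∧
            (h ≤ dist (X (n + 2) 1 ω) XT ∧
              ∀ j : Fin (n + 2), j ≠ 1 →
                dist (X (n + 2) 1 ω) (X (n + 2) j ω) < h →
                  M (n + 2) 1 ω < M (n + 2) j ω)}).toReal)
      atTop
      (nhds (((1 - Real.exp (-(π * ρp * h ^ 2))) / (π * ρp * h ^ 2)) ^ 2)) := by
  have hc : 0 < π * ρp * h ^ 2 := by positivity
  have hR_sq : ∀ n : ℕ, h ^ 2 / R (n + 2) ^ 2 = π * ρp * h ^ 2 / ((n : ℝ) + 2) := fun n => by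
    rw [hR, Real.sq_sqrt (by positivity)]
    push_cast
    field_simp
  have hR_tendsto : Tendsto (fun n => R (n + 2)) atTop atTop := by
    simp_rw [hR]
    exact tendsto_sqrt_atTop.comp <| (tendsto_natCast_atTop_atTop.comp
      (tendsto_add_atTop_nat 2)).atTop_div_const (by positivity)
  refine (tendsto_integral_one_sub_div_add_two_mul_pow hc).congr' ?_
  filter_upwards [hR_tendsto.eventually_ge_atTop (rT + 5 * h)] with n hn
  rw [← hR_sq n]
  exact (toReal_cond_isActive_zero_one_of_iIndepFun (fun i => (hmeasX _ i).prodMk (hmeasM _ i))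
    (hindep (n + 2)) (hlaw (n + 2)) hrT.ge hh hn).symm

/-- HC-II, joint conditional.  Fix `ρ_p > 0`, `h > 0`, `X_T ∈ ℝ²` with
`r_T = |X_T|`.  For each `n ≥ 2` let `R_n = √(n/(π ρ_p))`, `X_1, …, X_n` i.i.d. uniform
on the disk of radius `R_n`, `M_1, …, M_n` i.i.d. uniform marks on `[0,1]` independent of
the positions.  `P_i = 1` iff `|X_i − X_T| ≥ h` and `M_i < M_j` for every `j ≠ i` with
`|X_i − X_j| < h`; `𝒜_n` is the event that `X_1, X_2` lie in the annulus
`{x : r_T + 2h ≤ |x| ≤ R_n − h}` and `|X_1 − X_2| > 2h`.  Then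
`Pr(P_1 = 1 ∧ P_2 = 1 | 𝒜_n) → ((1 − exp(−π ρ_p h²))/(π ρ_p h²))²`. -/
theorem stmt11 (ρp h : ℝ) (hρp : 0 < ρp) (hh : 0 < h)
    (XT : EuclideanSpace ℝ (Fin 2)) (rT : ℝ) (hrT : rT = ‖XT‖)
    (R : ℕ → ℝ) (hR : ∀ n : ℕ, R n = Real.sqrt (n / (π * ρp)))
    (Ω : ℕ → Type) [∀ n, MeasurableSpace (Ω n)]
    (P : (n : ℕ) → Measure (Ω n)) (hprob : ∀ n, IsProbabilityMeasure (P n))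
    (X : (n : ℕ) → Fin n → Ω n → EuclideanSpace ℝ (Fin 2))
    (M : (n : ℕ) → Fin n → Ω n → ℝ)
    (hmeasX : ∀ n i, Measurable (X n i)) (hmeasM : ∀ n i, Measurable (M n i))
    (hindep : ∀ n, iIndepFun
      (fun i : Fin n => fun ω => (X n i ω, M n i ω)) (P n))
    (hlaw : ∀ n (i : Fin n), (P n).map (fun ω => (X n i ω, M n i ω)) =
      (unifDisk (R n)).prod unifUnit) :
    Tendsto
      (fun n : ℕ =>
        (((P (n + 2))[|{ω | (rT + 2 * h ≤ ‖X (n + 2) 0 ω‖ ∧ ‖X (n + 2) 0 ω‖ ≤ R (n + 2) - h) ∧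
            (rT + 2 * h ≤ ‖X (n + 2) 1 ω‖ ∧ ‖X (n + 2) 1 ω‖ ≤ R (n + 2) - h) ∧
            2 * h < dist (X (n + 2) 0 ω) (X (n + 2) 1 ω)}])
          {ω | (h ≤ dist (X (n + 2) 0 ω) XT ∧
              ∀ j : Fin (n + 2), j ≠ 0 →
                dist (X (n + 2) 0 ω) (X (n + 2) j ω) < h →
                  M (n + 2) 0 ω < M (n + 2) j ω) ∧
            (h ≤ dist (X (n + 2) 1 ω) XT ∧
              ∀ j : Fin (n + 2), j ≠ 1 →
                dist (X (n + 2) 1 ω) (X (n + 2) j ω) < h →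
                  M (n + 2) 1 ω < M (n + 2) j ω)}).toReal)
      atTop
      (nhds (((1 - Real.exp (-(π * ρp * h ^ 2))) / (π * ρp * h ^ 2)) ^ 2)) :=
  stmt11_general ρp h hρp hh XT rT hrT R hR Ω P X M hmeasX hmeasM hindep hlaw
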